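/- Let ℓ ≥ 1 be an integer and let g : ℝ → ℝ be (2ℓ+2)-times continuously differentiable with iteratedDeriv k g 0 = 0 for every k with 1 ≤ k ≤ 2ℓ+1, and iteratedDeriv (2ℓ+2) g 0 ≠ 0. Then there exist δ ∈ (0,1) and ε₀ > 0 such that for every continuous function p : ℝ → ℝ satisfying |p(y)| ≤ ε₀ for all y ∈ [−1,1], there exists y ∈ [−δ,δ] with deriv g y + p(y) = 0. -/

import Mathlib

open Set

lemma myIDW {n : ℕ} {m : ℕ} {f : ℝ → ℝ} (hf : ContDiff ℝ (n : ℕ) f)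
    (hmn : m ≤ n) {s : Set ℝ} (hs : UniqueDiffOn ℝ s) {x : ℝ} (hx : x ∈ s) :
    iteratedDerivWithin m f s x = iteratedDeriv m f x := by
  have h := contDiff_iff_ftaylorSeries.mp hf
  rw [iteratedDerivWithin_eq_iteratedFDerivWithin, iteratedDeriv_eq_iteratedFDeriv]
  rw [← ((hasFTaylorSeriesUpToOn_univ_iff.mpr h).mono
      (subset_univ s)).eq_iteratedFDerivWithin_of_uniqueDiffOn (by exact_mod_cast hmn) hs hx,
    h.eq_iteratedFDeriv (by exact_mod_cast hmn) x]

lemma taylorSign {n : ℕ} (hn : 0 < n) {f : ℝ → ℝ} (hf : ContDiff ℝ (n : ℕ) f)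
    (hv : ∀ k < n, iteratedDeriv k f 0 = 0) {x : ℝ} (hx : 0 < x) :
    ∃ c ∈ Ioo (0 : ℝ) x, f x = iteratedDeriv n f c * x ^ n / (n.factorial : ℝ) := by
  obtain ⟨m, rfl⟩ : ∃ m, n = m + 1 := ⟨n - 1, by omega⟩
  have hs : UniqueDiffOn ℝ (Icc (0 : ℝ) x) := uniqueDiffOn_Icc hx
  have hco : ContDiffOn ℝ m f (Icc 0 x) :=
    (hf.of_le (by exact_mod_cast Nat.le_succ m)).contDiffOn
  have hdiff : DifferentiableOn ℝ (iteratedDerivWithin m f (Icc 0 x)) (Ioo 0 x) := by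
    refine ((hf.differentiable_iteratedDeriv m
      (by exact_mod_cast Nat.lt_succ_self m)).differentiableOn).congr fun y hy => ?_
    exact myIDW hf (Nat.le_succ m) hs (Ioo_subset_Icc_self hy)
  obtain ⟨x', hx', hf'⟩ := taylor_mean_remainder_lagrange hx.ne
    (by rwa [uIcc_of_le hx.le]) (by rwa [uIcc_of_le hx.le, uIoo_of_le hx.le])
  rw [uIoo_of_le hx.le] at hx'
  rw [uIcc_of_le hx.le] at hf'
  refine ⟨x', hx', ?_⟩
  have htay : taylorWithinEval f m (Icc 0 x) 0 x = 0 := by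
    rw [taylor_within_apply]
    refine Finset.sum_eq_zero fun k hk => ?_
    have hk' := Finset.mem_range.mp hk
    rw [myIDW hf (by omega) hs (left_mem_Icc.mpr hx.le), hv k hk', smul_zero]
  rw [htay, sub_zero] at hf'
  rw [hf', myIDW hf le_rfl hs (Ioo_subset_Icc_self hx'), sub_zero]

lemma taylorSignNeg {n : ℕ} (hn : 0 < n) {f : ℝ → ℝ} (hf : ContDiff ℝ (n : ℕ) f)
    (hv : ∀ k < n, iteratedDeriv k f 0 = 0) {x : ℝ} (hx : 0 < x) :
    ∃ c ∈ Ioo (-x) (0 : ℝ), f (-x) = (-1 : ℝ) ^ n * iteratedDeriv n f c * x ^ n / (n.factorial : ℝ) := by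
  have hfn : ContDiff ℝ (n : ℕ) (fun t => f (-t)) := hf.comp contDiff_id.neg
  have hvn : ∀ k < n, iteratedDeriv k (fun t => f (-t)) 0 = 0 := fun k hk => by
    rw [iteratedDeriv_comp_neg, neg_zero, hv k hk, smul_zero]
  obtain ⟨c, hc, hfc⟩ := taylorSign hn hfn hvn hx
  refine ⟨-c, ⟨by linarith [hc.2], by linarith [hc.1]⟩, ?_⟩
  rw [hfc, iteratedDeriv_comp_neg, smul_eq_mul]

/-- Theorem 2.8(2): if g is C^{2ℓ+2} with vanishing derivatives of orders 1,…,2ℓ+1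
at 0 and g^{(2ℓ+2)}(0) ≠ 0, then there are δ ∈ (0,1) and ε₀ > 0 such that any
continuous p with |p| ≤ ε₀ on [−1,1] yields a solution of g'(y) + p(y) = 0
in [−δ,δ]. -/
theorem stmt2 (ℓ : ℕ) (hℓ : 1 ≤ ℓ) (g : ℝ → ℝ)
    (hg : ContDiff ℝ (2 * ℓ + 2 : ℕ) g)
    (hvanish : ∀ k : ℕ, 1 ≤ k → k ≤ 2 * ℓ + 1 → iteratedDeriv k g 0 = 0)
    (hA : iteratedDeriv (2 * ℓ + 2) g 0 ≠ 0) :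
    ∃ δ ∈ Ioo (0 : ℝ) 1, ∃ ε₀ > (0 : ℝ),
      ∀ p : ℝ → ℝ, Continuous p →
        (∀ y ∈ Icc (-1 : ℝ) 1, |p y| ≤ ε₀) →
        ∃ y ∈ Icc (-δ) δ, deriv g y + p y = 0 := by
  set n := 2 * ℓ + 1 with hn
  set f := deriv g with hfdef
  have hf : ContDiff ℝ (n : ℕ) f := by
    have : ContDiff ℝ ((n : WithTop ℕ∞) + 1) g := by
      have : ((2 * ℓ + 2 : ℕ) : WithTop ℕ∞) = (n : WithTop ℕ∞) + 1 := by
        push_cast [hn]; ring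
      rw [← this]; exact hg
    exact (contDiff_succ_iff_deriv.mp this).2.2
  have hAf : iteratedDeriv n f 0 ≠ 0 := by
    have : iteratedDeriv (2 * ℓ + 2) g = iteratedDeriv n f := by
      rw [hfdef, hn, show 2 * ℓ + 2 = (2 * ℓ + 1) + 1 from rfl, iteratedDeriv_succ']
    rwa [this] at hA
  set A := iteratedDeriv n f 0 with hAdef
  have hv : ∀ k < n, iteratedDeriv k f 0 = 0 := fun k hk => by
    have : iteratedDeriv k f 0 = iteratedDeriv (k + 1) g 0 := by
      rw [hfdef, iteratedDeriv_succ']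
    rw [this]; exact hvanish (k + 1) (by omega) (by omega)
  have hGcont : Continuous (iteratedDeriv n f) :=
    ContDiff.continuous_iteratedDeriv n hf le_rfl
  have hApos : 0 < |A| := abs_pos.mpr hAf
  obtain ⟨δ', hδ'pos, hδ'⟩ := Metric.continuousAt_iff.mp hGcont.continuousAt (|A| / 2)
    (by linarith)
  set δ : ℝ := min (δ' / 2) (1 / 2) with hδdef
  have hδpos : 0 < δ := lt_min (by linarith) (by norm_num)
  have hδlt1 : δ < 1 := lt_of_le_of_lt (min_le_right _ _) (by norm_num)
  have hnear : ∀ c : ℝ, |c| ≤ δ → |iteratedDeriv n f c - A| < |A| / 2 := by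
    intro c hc
    apply hδ'
    rw [Real.dist_eq, sub_zero]
    calc |c| ≤ δ := hc
      _ ≤ δ' / 2 := min_le_left _ _
      _ < δ' := by linarith
  have hnpos : (0 : ℕ) < n := by omega
  set ε₀ : ℝ := |A| / 2 * δ ^ n / (n.factorial : ℝ) with hε₀def
  have hfactpos : (0 : ℝ) < (n.factorial : ℝ) := by exact_mod_cast Nat.factorial_pos n
  have hε₀pos : 0 < ε₀ := by
    apply div_pos (mul_pos (by linarith) (pow_pos hδpos n)) hfactpos
  refine ⟨δ, ⟨hδpos, hδlt1⟩, ε₀, hε₀pos, fun p hp hpb => ?_⟩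
  obtain ⟨c₁, hc₁, hfc₁⟩ := taylorSign hnpos hf hv hδpos
  obtain ⟨c₂, hc₂, hfc₂⟩ := taylorSignNeg hnpos hf hv hδpos
  have hG₁ := hnear c₁ (by rw [abs_of_pos hc₁.1]; exact hc₁.2.le)
  have hG₂ := hnear c₂ (by rw [abs_of_neg hc₂.2]; linarith [hc₂.1])
  have hodd : (-1 : ℝ) ^ n = -1 := by
    rw [hn]; exact Odd.neg_one_pow ⟨ℓ, by ring⟩
  have hpb₁ : |p δ| ≤ ε₀ := hpb δ ⟨by linarith, hδlt1.le⟩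
  have hpb₂ : |p (-δ)| ≤ ε₀ := hpb (-δ) ⟨by linarith, by linarith⟩
  have hdpow : 0 < δ ^ n := pow_pos hδpos n
  have hcont : ContinuousOn (fun y => f y + p y) (Icc (-δ) δ) :=
    (hf.continuous.add hp).continuousOn
  rcases lt_or_gt_of_ne hAf with hAneg | hApos'
  · -- A < 0 : f δ ≤ -ε₀, f (-δ) ≥ ε₀
    have habs : |A| = -A := abs_of_neg hAneg
    have h1 : iteratedDeriv n f c₁ ≤ A / 2 := by
      have := abs_lt.mp hG₁; rw [habs] at this; linarith [this.2]
    have h2 : iteratedDeriv n f c₂ ≤ A / 2 := by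
      have := abs_lt.mp hG₂; rw [habs] at this; linarith [this.2]
    have hfδ : f δ ≤ -ε₀ := by
      rw [hfc₁, hε₀def, habs]
      rw [← neg_div, div_le_div_iff_of_pos_right hfactpos]
      linarith only [mul_le_mul_of_nonneg_right h1 hdpow.le]
    have hfmδ : ε₀ ≤ f (-δ) := by
      rw [hfc₂, hodd, hε₀def, habs, div_le_div_iff_of_pos_right hfactpos]
      linarith only [mul_le_mul_of_nonneg_right h2 hdpow.le]
    have hleft : 0 ≤ f (-δ) + p (-δ) := by
      have := abs_le.mp hpb₂; linarith [this.1]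
    have hright : f δ + p δ ≤ 0 := by
      have := abs_le.mp hpb₁; linarith [this.2]
    have := intermediate_value_Icc' (by linarith : -δ ≤ δ) hcont
      (⟨hright, hleft⟩ : (0 : ℝ) ∈ Icc (f δ + p δ) (f (-δ) + p (-δ)))
    obtain ⟨y, hy, hy0⟩ := this
    exact ⟨y, hy, hy0⟩
  · -- A > 0 : f δ ≥ ε₀, f (-δ) ≤ -ε₀
    have habs : |A| = A := abs_of_pos hApos'
    have h1 : A / 2 ≤ iteratedDeriv n f c₁ := by
      have := abs_lt.mp hG₁; rw [habs] at this; linarith [this.1]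
    have h2 : A / 2 ≤ iteratedDeriv n f c₂ := by
      have := abs_lt.mp hG₂; rw [habs] at this; linarith [this.1]
    have hfδ : ε₀ ≤ f δ := by
      rw [hfc₁, hε₀def, habs, div_le_div_iff_of_pos_right hfactpos]
      linarith only [mul_le_mul_of_nonneg_right h1 hdpow.le]
    have hfmδ : f (-δ) ≤ -ε₀ := by
      rw [hfc₂, hodd, hε₀def, habs]
      rw [← neg_div, div_le_div_iff_of_pos_right hfactpos]
      linarith only [mul_le_mul_of_nonneg_right h2 hdpow.le]
    have hleft : f (-δ) + p (-δ) ≤ 0 := by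
      have := abs_le.mp hpb₂; linarith [this.2]
    have hright : 0 ≤ f δ + p δ := by
      have := abs_le.mp hpb₁; linarith [this.1]
    have := intermediate_value_Icc (by linarith : -δ ≤ δ) hcont
      (⟨hleft, hright⟩ : (0 : ℝ) ∈ Icc (f (-δ) + p (-δ)) (f δ + p δ))
    obtain ⟨y, hy, hy0⟩ := this
    exact ⟨y, hy, hy0⟩
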